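/- Let G be a discrete subgroup of SL(2,ℝ), viewed inside SL(2,ℂ) via the inclusion ℝ ⊆ ℂ on matrix entries (a Fuchsian group). Then the limit set Λ_G ⊆ ℙ¹(ℂ) is contained in the image of the real projective line, i.e. in the set of points of ℙ¹(ℂ) admitting a representative vector in ℝ² ⊆ ℂ². Equivalently, the complement of this circle (the union of the upper and lower half-planes inside ℙ¹(ℂ)) is contained in the domain of discontinuity Ω_G. -/

import Mathlib

open Matrix

noncomputable section

abbrev SL2C := Matrix.SpecialLinearGroup (Fin 2) ℂ

/-- The complex projective line. -/
abbrev P1C := Projectivization ℂ (Fin 2 → ℂ)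

instance : TopologicalSpace P1C :=
  inferInstanceAs (TopologicalSpace (Quotient (projectivizationSetoid ℂ (Fin 2 → ℂ))))

/-- The action of `SL(2,ℂ)` on the projective line induced by the linear action. -/
def smulP (g : SL2C) (x : P1C) : P1C :=
  x.map (Matrix.SpecialLinearGroup.toLin' g).toLinearMap
    (Matrix.SpecialLinearGroup.toLin' g).injective

/-- `G` is discrete if it is a discrete subset of the space of 2x2 complex matrices. -/
def IsDiscreteSG (G : Subgroup SL2C) : Prop :=
  DiscreteTopology ((fun g : SL2C => (g : Matrix (Fin 2) (Fin 2) ℂ)) '' (G : Set SL2C))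

/-- The domain of discontinuity: the union of all open sets `U` such that
`{g ∈ G : g•U ∩ U ≠ ∅}` is finite. -/
def domOfDisc (G : Subgroup SL2C) : Set P1C :=
  ⋃₀ {U : Set P1C | IsOpen U ∧ {g : SL2C | g ∈ G ∧ (smulP g '' U ∩ U).Nonempty}.Finite}

/-- The limit set: the complement of the domain of discontinuity. -/
def limitSet (G : Subgroup SL2C) : Set P1C := (domOfDisc G)ᶜ

abbrev SL2R := Matrix.SpecialLinearGroup (Fin 2) ℝ

/-- `G` is discrete if it is a discrete subset of the space of 2x2 real matrices. -/
def IsDiscreteSGR (G : Subgroup SL2R) : Prop :=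
  DiscreteTopology ((fun g : SL2R => (g : Matrix (Fin 2) (Fin 2) ℝ)) '' (G : Set SL2R))

/-- The inclusion `SL(2,ℝ) → SL(2,ℂ)` induced by `ℝ ⊆ ℂ` on matrix entries. -/
def inclRC : SL2R →* SL2C := Matrix.SpecialLinearGroup.map Complex.ofRealHom

/-!
A point of `ℙ¹(ℂ)` off the real circle is `[z : 1]` with `z` or `conj z` in the upper half-plane
`ℍ`. The affine chart `z ↦ [z : 1]` is an open map which intertwines the action of real matrices
with their Möbius action on `ℍ` (and, composed with conjugation, on the lower half-plane). A
discrete subgroup of `SL(2,ℝ)` acts properly discontinuously on `ℍ`, so the chart image of the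
interior of a compact neighbourhood in `ℍ` is an open set meeting only finitely many of its
translates.
-/

open Topology UpperHalfPlane ComplexConjugate

namespace P1C

def ofComplex (z : ℂ) : P1C := Projectivization.mk ℂ ![z, 1] (by simp)

theorem ofComplex_injective : Function.Injective ofComplex := by
  intro z w h
  obtain ⟨t, ht⟩ := (Projectivization.mk_eq_mk_iff' ℂ _ _ _ _).1 h
  have h1 : t = 1 := by simpa using congrFun ht 1
  simpa [h1] using (congrFun ht 0).symm

theorem mk_eq_ofComplex (v : Fin 2 → ℂ) (hv : v ≠ 0) (h1 : v 1 ≠ 0) :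
    Projectivization.mk ℂ v hv = ofComplex (v 0 / v 1) := by
  rw [ofComplex, Projectivization.mk_eq_mk_iff']
  refine ⟨v 1, ?_⟩
  ext i; fin_cases i <;> simp [mul_div_cancel₀ _ h1]

theorem mk_ne_ofComplex (v : Fin 2 → ℂ) (hv : v ≠ 0) (h1 : v 1 = 0) (z : ℂ) :
    Projectivization.mk ℂ v hv ≠ ofComplex z := by
  rw [ofComplex, Ne, Projectivization.mk_eq_mk_iff']
  rintro ⟨t, rfl⟩
  have ht : t = 0 := by simpa using h1
  simp [ht] at hv

theorem mk_mem_ofComplex_image_iff (v : Fin 2 → ℂ) (hv : v ≠ 0) (V : Set ℂ) :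
    Projectivization.mk ℂ v hv ∈ ofComplex '' V ↔ v 1 ≠ 0 ∧ v 0 / v 1 ∈ V := by
  by_cases h1 : v 1 = 0
  · simp only [h1, ne_eq, not_true_eq_false, false_and, iff_false]
    rintro ⟨z, -, hz⟩
    exact mk_ne_ofComplex v hv h1 z hz.symm
  · rw [mk_eq_ofComplex v hv h1, ofComplex_injective.mem_set_image]
    exact (and_iff_right h1).symm

theorem isQuotientMap_mk' :
    IsQuotientMap (Projectivization.mk' ℂ : {v : Fin 2 → ℂ // v ≠ 0} → P1C) :=
  isQuotientMap_quotient_mk'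

theorem isOpenMap_ofComplex : IsOpenMap ofComplex := by
  intro V hV
  rw [← isQuotientMap_mk'.isOpen_preimage]
  have hpre : Projectivization.mk' ℂ ⁻¹' (ofComplex '' V) =
      {v : {v : Fin 2 → ℂ // v ≠ 0} | v.1 1 ≠ 0} ∩ (fun v => v.1 0 / v.1 1) ⁻¹' V := by
    ext ⟨v, hv⟩
    exact mk_mem_ofComplex_image_iff v hv V
  have hcoord (i : Fin 2) : Continuous fun v : {v : Fin 2 → ℂ // v ≠ 0} => v.1 i :=
    (continuous_apply i).comp continuous_subtype_val
  rw [hpre]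
  exact ((hcoord 0).continuousOn.div (hcoord 1).continuousOn fun _ h => h).isOpen_inter_preimage
    (isOpen_ne_fun (hcoord 1) continuous_const) hV

theorem exists_real_rep_or_eq_ofComplex (x : P1C) :
    (∃ (v : Fin 2 → ℝ) (hv : (fun i => (v i : ℂ)) ≠ 0),
      x = Projectivization.mk ℂ (fun i => (v i : ℂ)) hv) ∨
    ∃ z : ℂ, z.im ≠ 0 ∧ x = ofComplex z := by
  obtain ⟨v, hv, rfl⟩ : ∃ (v : Fin 2 → ℂ) (hv : v ≠ 0), x = Projectivization.mk ℂ v hv :=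
    ⟨x.rep, x.rep_nonzero, x.mk_rep.symm⟩
  by_cases h1 : v 1 = 0
  · refine Or.inl ⟨![1, 0], fun h => by simpa using congrFun h 0, ?_⟩
    rw [Projectivization.mk_eq_mk_iff']
    exact ⟨v 0, by ext i; fin_cases i <;> simp [h1]⟩
  rw [mk_eq_ofComplex v hv h1]
  by_cases him : (v 0 / v 1).im = 0
  · refine Or.inl ⟨![(v 0 / v 1).re, 1], fun h => by simpa using congrFun h 1, ?_⟩
    rw [ofComplex]
    congr 1
    ext i; fin_cases i <;> simp [Complex.ext_iff, him]
  · exact Or.inr ⟨_, him, rfl⟩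

end P1C

theorem smulP_mk (g : SL2C) (v : Fin 2 → ℂ) (hv : v ≠ 0) :
    smulP g (Projectivization.mk ℂ v hv) =
      Projectivization.mk ℂ ((g : Matrix (Fin 2) (Fin 2) ℂ) *ᵥ v)
        ((g.toLin'.map_ne_zero_iff).2 hv) := by
  rw [smulP, Projectivization.map_mk]
  rfl

theorem smulP_inclRC_ofComplex_map (φ : ℂ →+* ℂ) (hφ : ∀ r : ℝ, φ r = r) (γ : SL2R) (τ : ℍ) :
    smulP (inclRC γ) (P1C.ofComplex (φ τ)) = P1C.ofComplex (φ ↑(γ • τ)) := by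
  have hvec : ((inclRC γ : SL2C) : Matrix (Fin 2) (Fin 2) ℂ) *ᵥ ![φ τ, 1] =
      ![φ ((γ 0 0 : ℂ) * τ + γ 0 1), φ ((γ 1 0 : ℂ) * τ + γ 1 1)] := by
    ext i; fin_cases i <;> simp [inclRC, Matrix.mulVec, dotProduct, Fin.sum_univ_two, hφ]
  have hden : ((γ 1 0 : ℂ) * τ + γ 1 1) ≠ 0 := by
    simpa [UpperHalfPlane.denom] using
      UpperHalfPlane.denom_ne_zero (Matrix.SpecialLinearGroup.mapGL ℝ γ) τ
  rw [P1C.ofComplex, smulP_mk]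
  refine (P1C.mk_eq_ofComplex _ _ ?_).trans ?_
  · rw [hvec]; exact (map_ne_zero φ).2 hden
  · simp [hvec, UpperHalfPlane.coe_specialLinearGroup_apply, map_div₀]

theorem discreteTopology_of_isDiscreteSGR {G : Subgroup SL2R} (hG : IsDiscreteSGR G) :
    DiscreteTopology G :=
  have : DiscreteTopology _ := hG
  DiscreteTopology.of_continuous_injective
    (f := fun γ : G => (⟨γ.1.1, γ.1, γ.2, rfl⟩ :
      (fun g : SL2R => (g : Matrix (Fin 2) (Fin 2) ℝ)) '' (G : Set SL2R)))
    (by fun_prop) fun _ _ h => Subtype.ext <| Subtype.ext <| (congrArg Subtype.val h :)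

theorem ofComplex_map_mem_domOfDisc (G : Subgroup SL2R) [DiscreteTopology G] (φ : ℂ →+* ℂ)
    (hφ : ∀ r : ℝ, φ r = r) (hφo : IsOpenMap φ) (τ : ℍ) :
    P1C.ofComplex (φ τ) ∈ domOfDisc (G.map inclRC) := by
  obtain ⟨K, hKc, hK⟩ := exists_compact_mem_nhds τ
  refine Set.mem_sUnion.2 ⟨(fun τ : ℍ => P1C.ofComplex (φ τ)) '' interior K, ⟨?_, ?_⟩,
    τ, mem_interior_iff_mem_nhds.2 hK, rfl⟩
  · exact (P1C.isOpenMap_ofComplex.comp hφo).comp isOpenEmbedding_coe.isOpenMap _ isOpen_interior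
  refine ((ProperlyDiscontinuousSMul.finite_disjoint_inter_image (Γ := G) hKc hKc).image
    fun γ : G => inclRC γ).subset ?_
  rintro g ⟨hg, -, ⟨-, ⟨τ₁, hτ₁, rfl⟩, rfl⟩, ⟨τ₂, hτ₂, h⟩⟩
  obtain ⟨γ, hγ, rfl⟩ := Subgroup.mem_map.1 hg
  rw [smulP_inclRC_ofComplex_map φ hφ] at h
  have hτ : τ₂ = γ • τ₁ :=
    UpperHalfPlane.ext (φ.injective (P1C.ofComplex_injective h))
  exact ⟨⟨γ, hγ⟩, ⟨γ • τ₁, ⟨τ₁, interior_subset hτ₁, rfl⟩, hτ ▸ interior_subset hτ₂⟩, rfl⟩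

/-- The limit set of a Fuchsian group is contained in the image of the real projective
line: every point of the limit set admits a representative vector in `ℝ² ⊆ ℂ²`. -/
theorem limitSet_of_fuchsian_subset_realCircle (G : Subgroup SL2R)
    (hdisc : IsDiscreteSGR G) :
    ∀ x ∈ limitSet (G.map inclRC),
      ∃ (v : Fin 2 → ℝ) (hv : (fun i => (v i : ℂ)) ≠ 0),
        x = Projectivization.mk ℂ (fun i => (v i : ℂ)) hv := by
  have : DiscreteTopology G := discreteTopology_of_isDiscreteSGR hdisc
  intro x hx
  refine (P1C.exists_real_rep_or_eq_ofComplex x).resolve_right ?_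
  rintro ⟨z, hz, rfl⟩
  rcases hz.lt_or_gt with hneg | hpos
  · have hconj := ofComplex_map_mem_domOfDisc G (starRingEnd ℂ) Complex.conj_ofReal
      Complex.conjCLE.toHomeomorph.isOpenMap ⟨conj z, by simpa using hneg⟩
    exact hx (by simpa using hconj)
  · exact hx (ofComplex_map_mem_domOfDisc G (RingHom.id ℂ) (fun _ => rfl) IsOpenMap.id ⟨z, hpos⟩)
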